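/- arXiv:2603.22878 — 6 statements merged into one kernel-verified Lean document; each statement's English description precedes it below -/
import Mathlib

section
/- The sequence of k-generalized Lucas numbers {L_n^{(k)}} is periodic modulo 2 with period k+1; that is, L_n^{(k)} ≡ L_{n+(k+1)}^{(k)} (mod 2) for all integers n. -/
/-!
Summing `f (n - i)` over `i ≤ k` in two ways (splitting off the first or the last term) turns the
recurrence into `f (n + 1) + f (n - k) = 2 f n`. Hence `f (n + k + 1) ≡ -f n ≡ f n` modulo 2.
-/

open Finset

theorem add_sub_eq_add_of_eq_sum_range {M : Type*} [AddCommMonoid M] {k : ℕ} {f : ℤ → M}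
    (hf : ∀ n : ℤ, f n = ∑ i ∈ range k, f (n - 1 - (i : ℤ))) (n : ℤ) :
    f (n + 1) + f (n - k) = f n + f n := by
  have split_first : ∑ i ∈ range (k + 1), f (n - i) = f n + f n := by
    rw [sum_range_succ', add_comm]
    nth_rw 2 [hf n]
    simp only [Nat.cast_zero, sub_zero]
    exact congrArg _ (sum_congr rfl fun i _ => by push_cast; ring_nf)
  have split_last : ∑ i ∈ range (k + 1), f (n - i) = f (n + 1) + f (n - k) := by
    rw [sum_range_succ, hf (n + 1)]
    simp only [add_sub_cancel_right]
  rw [← split_last, split_first]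

theorem stmt_5_general (k : ℕ) (L : ℤ → ℤ)
    (hLrec : ∀ n : ℤ, L n = ∑ i ∈ Finset.range k, L (n - 1 - (i : ℤ))) :
    ∀ n : ℤ, L n ≡ L (n + ((k : ℤ) + 1)) [ZMOD 2] := by
  intro n
  have h := add_sub_eq_add_of_eq_sum_range hLrec (n + k)
  rw [add_sub_cancel_right] at h
  rw [Int.modEq_iff_dvd, ← add_assoc]
  exact ⟨L (n + k) - L n, by linarith⟩

theorem stmt_5 (k : ℕ) (hk : 2 ≤ k) (L : ℤ → ℤ)
    (hL0 : L 0 = 2) (hL1 : L 1 = 1)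
    (hLneg : ∀ n : ℤ, 2 - (k : ℤ) ≤ n → n ≤ -1 → L n = 0)
    (hLrec : ∀ n : ℤ, L n = ∑ i ∈ Finset.range k, L (n - 1 - (i : ℤ))) :
    ∀ n : ℤ, L n ≡ L (n + ((k : ℤ) + 1)) [ZMOD 2] :=
  stmt_5_general k L hLrec
end

section
/- Let k ≥ 2 and write n = m(k+1) with m ≥ 0 an integer. Then L_n^{(k)} ≡ 2·(−1)^m (mod 2^{k−2}). -/
/-!
Subtracting the recurrence at `n - 1` from the one at `n` gives `L n = 2 L (n-1) - L (n-1-k)`.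
Splitting the integers into blocks `m(k+1), …, m(k+1)+k`, this shows inductively (over blocks,
and over `i` within a block) that `2 ^ i ∣ L (m(k+1) + i + 2)`; the block before `0` holds the
initial zeros. In particular `2 ^ (k-2) ∣ L (m(k+1) + k)`, so
`L ((m+1)(k+1)) = 2 L (m(k+1) + k) - L (m(k+1)) ≡ -L (m(k+1))`.
-/

theorem eq_two_mul_sub_of_forall_eq_sum_range {R : Type*} [CommRing R] {k : ℕ} {L : ℤ → R}
    (hrec : ∀ n : ℤ, L n = ∑ i ∈ Finset.range k, L (n - 1 - (i : ℤ))) (n : ℤ) :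
    L n = 2 * L (n - 1) - L (n - 1 - k) := by
  have hsucc := Finset.sum_range_succ (fun i : ℕ ↦ L (n - 1 - i)) k
  have hsucc' := Finset.sum_range_succ' (fun i : ℕ ↦ L (n - 1 - i)) k
  have hshift : ∑ i ∈ Finset.range k, L (n - 1 - ((i + 1 : ℕ) : ℤ)) = L (n - 1) := by
    rw [hrec (n - 1)]
    refine Finset.sum_congr rfl fun i _ ↦ congrArg L ?_
    push_cast
    ring
  rw [hshift, Nat.cast_zero, sub_zero] at hsucc'
  rw [hrec n]
  linear_combination hsucc' - hsucc

section Blocks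

variable {k : ℕ} {L : ℤ → ℤ}

theorem two_pow_dvd_of_initial_zeros (hLneg : ∀ n : ℤ, 2 - (k : ℤ) ≤ n → n ≤ -1 → L n = 0)
    (i : ℕ) (hi : i + 2 ≤ k) : 2 ^ i ∣ L (-(k + 1) + i + 2) := by
  rcases i with _ | i
  · simp
  · rw [hLneg _ (by omega) (by omega)]
    exact dvd_zero _

variable (hrec : ∀ n : ℤ, L n = 2 * L (n - 1) - L (n - 1 - k))
include hrec

theorem two_pow_dvd_next_block {x : ℤ} (hx : ∀ i : ℕ, i + 2 ≤ k → 2 ^ i ∣ L (x + i + 2))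
    (i : ℕ) (hi : i + 2 ≤ k) : 2 ^ i ∣ L (x + (k + 1) + i + 2) := by
  induction i with
  | zero => simp
  | succ i ih =>
    have hstep : L (x + (k + 1) + (i + 1 : ℕ) + 2)
        = 2 * L (x + (k + 1) + i + 2) - L (x + (i + 1 : ℕ) + 2) := by
      rw [hrec]
      push_cast
      ring_nf
    rw [hstep]
    exact dvd_sub (pow_succ' (2 : ℤ) i ▸ mul_dvd_mul_left 2 (ih (by omega))) (hx (i + 1) hi)

theorem two_pow_dvd_add_mul {x : ℤ} (hx : ∀ i : ℕ, i + 2 ≤ k → 2 ^ i ∣ L (x + i + 2))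
    (m : ℕ) (i : ℕ) (hi : i + 2 ≤ k) : 2 ^ i ∣ L (x + m * (k + 1) + i + 2) := by
  induction m generalizing i with
  | zero => simpa using hx i hi
  | succ m ih =>
    convert two_pow_dvd_next_block hrec ih i hi using 3
    push_cast
    ring

theorem add_succ_modEq_neg {x : ℤ} (hx : 2 ^ (k - 2) ∣ L (x + k)) :
    L (x + (k + 1)) ≡ -L x [ZMOD 2 ^ (k - 2)] := by
  refine (Int.modEq_iff_dvd.mpr ?_).symm
  have hstep : L (x + (k + 1)) - -L x = 2 * L (x + k) := by
    rw [hrec]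
    ring_nf
  rw [hstep]
  exact dvd_mul_of_dvd_right hx 2

end Blocks

theorem stmt_6_general (k : ℕ) (hk : 2 ≤ k) (L : ℤ → ℤ)
    (hL0 : L 0 = 2)
    (hLneg : ∀ n : ℤ, 2 - (k : ℤ) ≤ n → n ≤ -1 → L n = 0)
    (hLrec : ∀ n : ℤ, L n = ∑ i ∈ Finset.range k, L (n - 1 - (i : ℤ)))
    (m : ℕ) (n : ℤ) (hn : n = (m : ℤ) * ((k : ℤ) + 1)) :
    L n ≡ 2 * (-1) ^ m [ZMOD 2 ^ (k - 2)] := by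
  have hrec := eq_two_mul_sub_of_forall_eq_sum_range hLrec
  have hblock (m : ℕ) : 2 ^ (k - 2) ∣ L (m * (k + 1) + k) := by
    convert two_pow_dvd_add_mul hrec (two_pow_dvd_of_initial_zeros hLneg) (m + 1) (k - 2)
      (by omega) using 2
    push_cast [Nat.cast_sub hk]
    ring
  subst hn
  induction m with
  | zero => simp [hL0]
  | succ m ih =>
    calc L ((m + 1 : ℕ) * (k + 1)) = L (m * (k + 1) + (k + 1)) := by push_cast; ring_nf
      _ ≡ -L (m * (k + 1)) [ZMOD 2 ^ (k - 2)] := add_succ_modEq_neg hrec (hblock m)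
      _ ≡ -(2 * (-1) ^ m) [ZMOD 2 ^ (k - 2)] := ih.neg
      _ = 2 * (-1) ^ (m + 1) := by ring

theorem stmt_6 (k : ℕ) (hk : 2 ≤ k) (L : ℤ → ℤ)
    (hL0 : L 0 = 2) (hL1 : L 1 = 1)
    (hLneg : ∀ n : ℤ, 2 - (k : ℤ) ≤ n → n ≤ -1 → L n = 0)
    (hLrec : ∀ n : ℤ, L n = ∑ i ∈ Finset.range k, L (n - 1 - (i : ℤ)))
    (m : ℕ) (n : ℤ) (hn : n = (m : ℤ) * ((k : ℤ) + 1)) :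
    L n ≡ 2 * (-1) ^ m [ZMOD 2 ^ (k - 2)] :=
  stmt_6_general k hk L hL0 hLneg hLrec m n hn
end

section
/- Let k ≥ 2 and write n = 2 + m(k+1) with m ≥ 0 an integer. Then L_n^{(k)} ≡ (4m² + 6m + 3)·(−1)^m (mod 2^{k}). -/
/-!
Subtracting the recurrence at `t` from the one at `t + 1` gives `L (t + 1) = 2 L t - L (t - k)`.
Arrange the indices `n ≥ 0` in rows of length `k + 1`, `n = r + m (k + 1)`: every entry is twice
its left neighbour minus the entry above it, the first entry of a row having the last entry of the
previous row as its left neighbour. Since `L` vanishes on `[2 - k, -1]`, the entries in column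
`j + 2` are divisible by `2 ^ j`. So the last column is divisible by `2 ^ (k - 2)`, and modulo
`2 ^ k` the first three columns evolve on their own: `2 L (m (k + 1)) ≡ 4 (-1) ^ m`, hence
`L (1 + m (k + 1)) ≡ (4 m + 1) (-1) ^ m`, and summing these,
`L (2 + m (k + 1)) ≡ (4 m ^ 2 + 6 m + 3) (-1) ^ m`.
-/

open Finset

def rowEntry (L : ℤ → ℤ) (k m r : ℕ) : ℤ := L (r + m * (k + 1))

@[simp]
theorem rowEntry_zero_left (L : ℤ → ℤ) (k r : ℕ) : rowEntry L k 0 r = L r := by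
  simp [rowEntry]

section

variable {k : ℕ} {L : ℤ → ℤ}

theorem eq_two_mul_sub_of_eq_sum_range (hrec : ∀ n : ℤ, L n = ∑ i ∈ range k, L (n - 1 - i))
    (t : ℤ) : L (t + 1) = 2 * L t - L (t - k) := by
  have hsucc : L (t + 1) = ∑ i ∈ range k, L (t - i) := by
    simp only [hrec (t + 1), add_sub_cancel_right]
  have hcurr : L t = ∑ i ∈ range k, L (t - (i + 1 : ℕ)) := by
    rw [hrec t]
    refine sum_congr rfl fun i _ => congrArg L ?_
    push_cast
    ring
  have htel := sum_range_sub' (fun i : ℕ => L (t - i)) k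
  simp only [Nat.cast_zero, sub_zero] at htel
  rw [sum_sub_distrib, ← hsucc, ← hcurr] at htel
  linarith

theorem rowEntry_succ_succ (hrec : ∀ n : ℤ, L n = ∑ i ∈ range k, L (n - 1 - i)) (m r : ℕ) :
    rowEntry L k (m + 1) (r + 1) = 2 * rowEntry L k (m + 1) r - rowEntry L k m (r + 1) := by
  simp only [rowEntry]
  push_cast
  rw [show (r : ℤ) + 1 + (m + 1) * (k + 1) = r + (m + 1) * (k + 1) + 1 by ring,
    eq_two_mul_sub_of_eq_sum_range hrec]
  ring_nf

theorem rowEntry_succ_zero (hrec : ∀ n : ℤ, L n = ∑ i ∈ range k, L (n - 1 - i)) (m : ℕ) :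
    rowEntry L k (m + 1) 0 = 2 * rowEntry L k m k - rowEntry L k m 0 := by
  simp only [rowEntry]
  push_cast
  rw [zero_add, show ((m : ℤ) + 1) * (k + 1) = k + m * (k + 1) + 1 by ring,
    eq_two_mul_sub_of_eq_sum_range hrec]
  ring_nf

theorem two_pow_dvd_rowEntry (hrec : ∀ n : ℤ, L n = ∑ i ∈ range k, L (n - 1 - i))
    (hLneg : ∀ n : ℤ, 2 - (k : ℤ) ≤ n → n ≤ -1 → L n = 0) (j : ℕ) (hj : j + 2 ≤ k) (m : ℕ) :
    2 ^ j ∣ rowEntry L k m (j + 2) := by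
  induction j generalizing m with
  | zero => exact one_dvd _
  | succ j ih =>
    have hdouble (m : ℕ) : 2 ^ (j + 1) ∣ 2 * rowEntry L k m (j + 2) := by
      rw [pow_succ']
      exact mul_dvd_mul_left 2 (ih (by omega) m)
    rw [show j + 1 + 2 = j + 2 + 1 by ring]
    induction m with
    | zero =>
      have hL : L (j + 2 + 1) = 2 * L (j + 2) := by
        have h := eq_two_mul_sub_of_eq_sum_range hrec (j + 2)
        rw [hLneg (j + 2 - k) (by omega) (by omega)] at h
        linear_combination h
      simpa [hL] using hdouble 0
    | succ m ihm =>
      rw [rowEntry_succ_succ hrec]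
      exact dvd_sub (hdouble (m + 1)) ihm

theorem apply_two_eq_three (hk : 2 ≤ k) (hrec : ∀ n : ℤ, L n = ∑ i ∈ range k, L (n - 1 - i))
    (hL0 : L 0 = 2) (hL1 : L 1 = 1) (hLneg : ∀ n : ℤ, 2 - (k : ℤ) ≤ n → n ≤ -1 → L n = 0) :
    L 2 = 3 := by
  obtain ⟨p, rfl⟩ : ∃ p, k = p + 2 := ⟨k - 2, by omega⟩
  rw [hrec 2, sum_range_succ', sum_range_succ', sum_eq_zero fun i hi => hLneg _ ?_ ?_]
  · norm_num [hL0, hL1]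
  all_goals simp only [mem_range] at hi; push_cast; omega

theorem two_mul_rowEntry_zero_modEq (hk : 2 ≤ k)
    (hrec : ∀ n : ℤ, L n = ∑ i ∈ range k, L (n - 1 - i)) (hL0 : L 0 = 2)
    (hLneg : ∀ n : ℤ, 2 - (k : ℤ) ≤ n → n ≤ -1 → L n = 0) (m : ℕ) :
    2 * rowEntry L k m 0 ≡ 4 * (-1) ^ m [ZMOD 2 ^ k] := by
  induction m with
  | zero => simp [hL0]
  | succ m ih =>
    have hlast : (2 : ℤ) ^ k ∣ 4 * rowEntry L k m k := by
      have h := two_pow_dvd_rowEntry hrec hLneg (k - 2) (by omega) m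
      rw [Nat.sub_add_cancel hk] at h
      rw [show (2 : ℤ) ^ k = 2 ^ 2 * 2 ^ (k - 2) by rw [← pow_add, Nat.add_sub_cancel' hk]]
      exact mul_dvd_mul_left _ h
    calc 2 * rowEntry L k (m + 1) 0 = 4 * rowEntry L k m k - 2 * rowEntry L k m 0 := by
          rw [rowEntry_succ_zero hrec]; ring
      _ ≡ 0 - 4 * (-1) ^ m [ZMOD 2 ^ k] := (Int.modEq_zero_iff_dvd.2 hlast).sub ih
      _ = 4 * (-1) ^ (m + 1) := by ring

theorem rowEntry_one_modEq (hk : 2 ≤ k)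
    (hrec : ∀ n : ℤ, L n = ∑ i ∈ range k, L (n - 1 - i)) (hL0 : L 0 = 2) (hL1 : L 1 = 1)
    (hLneg : ∀ n : ℤ, 2 - (k : ℤ) ≤ n → n ≤ -1 → L n = 0) (m : ℕ) :
    rowEntry L k m 1 ≡ (4 * m + 1) * (-1) ^ m [ZMOD 2 ^ k] := by
  induction m with
  | zero => simp [hL1]
  | succ m ih =>
    calc rowEntry L k (m + 1) 1 = 2 * rowEntry L k (m + 1) 0 - rowEntry L k m 1 :=
          rowEntry_succ_succ hrec m 0
      _ ≡ 4 * (-1) ^ (m + 1) - (4 * m + 1) * (-1) ^ m [ZMOD 2 ^ k] :=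
          (two_mul_rowEntry_zero_modEq hk hrec hL0 hLneg (m + 1)).sub ih
      _ = (4 * (m + 1 : ℕ) + 1) * (-1) ^ (m + 1) := by push_cast; ring

theorem rowEntry_two_modEq (hk : 2 ≤ k)
    (hrec : ∀ n : ℤ, L n = ∑ i ∈ range k, L (n - 1 - i)) (hL0 : L 0 = 2) (hL1 : L 1 = 1)
    (hLneg : ∀ n : ℤ, 2 - (k : ℤ) ≤ n → n ≤ -1 → L n = 0) (m : ℕ) :
    rowEntry L k m 2 ≡ (4 * m ^ 2 + 6 * m + 3) * (-1) ^ m [ZMOD 2 ^ k] := by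
  induction m with
  | zero => simp [apply_two_eq_three hk hrec hL0 hL1 hLneg]
  | succ m ih =>
    calc rowEntry L k (m + 1) 2 = 2 * rowEntry L k (m + 1) 1 - rowEntry L k m 2 :=
          rowEntry_succ_succ hrec m 1
      _ ≡ 2 * ((4 * (m + 1 : ℕ) + 1) * (-1) ^ (m + 1)) - (4 * m ^ 2 + 6 * m + 3) * (-1) ^ m
          [ZMOD 2 ^ k] :=
          ((rowEntry_one_modEq hk hrec hL0 hL1 hLneg (m + 1)).mul_left 2).sub ih
      _ = (4 * (m + 1 : ℕ) ^ 2 + 6 * (m + 1 : ℕ) + 3) * (-1) ^ (m + 1) := by push_cast; ring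

end

theorem stmt_8 (k : ℕ) (hk : 2 ≤ k) (L : ℤ → ℤ)
    (hL0 : L 0 = 2) (hL1 : L 1 = 1)
    (hLneg : ∀ n : ℤ, 2 - (k : ℤ) ≤ n → n ≤ -1 → L n = 0)
    (hLrec : ∀ n : ℤ, L n = ∑ i ∈ Finset.range k, L (n - 1 - (i : ℤ)))
    (m : ℕ) (n : ℤ) (hn : n = 2 + (m : ℤ) * ((k : ℤ) + 1)) :
    L n ≡ (4 * (m : ℤ) ^ 2 + 6 * (m : ℤ) + 3) * (-1) ^ m [ZMOD 2 ^ k] := by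
  rw [hn]
  exact rowEntry_two_modEq hk hLrec hL0 hL1 hLneg m
end

section
/- Let k ≥ 2, r an integer with 3 ≤ r ≤ k, and n = r + m(k+1) with m ≥ 0. Then L_n^{(k)} ≡ (−1)^m · 2^{r−2} · [4(C(m+r+1, m) − C(m+r−1, m−2)) − (C(m+r, m) − C(m+r−2, m−2))] (mod 2^{k+r−2}), where C(a,b) denotes the binomial coefficient (taken to be 0 when b < 0 or b > a). -/
/-!
The k-term recurrence telescopes to `L (n + 1) = 2 L n - L (n - k)`, so `L` has generating
function `(2 - 3x + x²) / (1 - 2x + x^(k+1))` and `L n = 2 u n - 3 u (n - 1) + u (n - 2)`, where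
`u n = ∑ⱼ (-1)ʲ C(n - k j, j) 2^(n - (k+1) j)` are the coefficients of `1 / (1 - 2x + x^(k+1))`.
For `n = a + m (k + 1)` with `a ≤ k`, only the term `j = m` of `u n` survives modulo
`2^(a + k + 1)`: the earlier terms carry at least that power of two and the later ones vanish.
Pascal's rule turns the three surviving terms into the stated binomial expression.
-/

/-- Binomial coefficient on integers, taken to be `0` when the lower index is
negative or exceeds the upper index. -/
def ichoose (a b : ℤ) : ℤ :=
  if 0 ≤ b ∧ b ≤ a then (a.toNat).choose b.toNat else 0

/-- `C(t + j, j) * 2 ^ t`, the coefficient of `x ^ t * y ^ j` in `1 / (1 - 2 * x - y)`. -/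
def twoPowChoose (t : ℤ) (j : ℕ) : ℤ :=
  if 0 ≤ t then ((t.toNat + j).choose j : ℤ) * 2 ^ t.toNat else 0

/-- The coefficient of `x ^ n` in `1 / (1 - 2 * x + x ^ (k + 1))`, obtained from `twoPowChoose`
by substituting `y = -x ^ (k + 1)`. -/
def invCoeff (k : ℕ) (n : ℤ) : ℤ :=
  ∑ j ∈ Finset.range (n.toNat + 1), (-1) ^ j * twoPowChoose (n - (k + 1) * j) j

lemma twoPowChoose_of_neg {t : ℤ} (ht : t < 0) (j : ℕ) : twoPowChoose t j = 0 := by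
  simp [twoPowChoose, not_le.mpr ht]

lemma twoPowChoose_natCast (a j : ℕ) : twoPowChoose a j = (a + j).choose j * 2 ^ a := by
  simp [twoPowChoose]

lemma twoPowChoose_zero_sub {t : ℤ} (ht : 1 ≤ t) :
    twoPowChoose t 0 - 2 * twoPowChoose (t - 1) 0 = 0 := by
  obtain ⟨a, rfl⟩ : ∃ a : ℕ, t = a + 1 := ⟨(t - 1).toNat, by omega⟩
  have h := twoPowChoose_natCast (a + 1)
  push_cast at h
  simp [h, twoPowChoose_natCast, pow_succ, mul_comm]

lemma twoPowChoose_succ_sub (t : ℤ) (j : ℕ) :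
    twoPowChoose t (j + 1) - 2 * twoPowChoose (t - 1) (j + 1) = twoPowChoose t j := by
  rcases lt_trichotomy t 0 with ht | rfl | ht
  · simp [twoPowChoose_of_neg ht, twoPowChoose_of_neg (show t - 1 < 0 by omega)]
  · simp [twoPowChoose]
  obtain ⟨a, rfl⟩ : ∃ a : ℕ, t = a + 1 := ⟨(t - 1).toNat, by omega⟩
  have h := twoPowChoose_natCast (a + 1)
  push_cast at h
  rw [add_sub_cancel_right, h, h, twoPowChoose_natCast,
    show a + 1 + (j + 1) = a + (j + 1) + 1 by ring, Nat.choose_succ_succ',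
    show a + (j + 1) = a + 1 + j by ring]
  push_cast
  ring

lemma two_pow_dvd_twoPowChoose {e : ℕ} {t : ℤ} (h : e ≤ t) (j : ℕ) :
    2 ^ e ∣ twoPowChoose t j := by
  rw [twoPowChoose, if_pos (by omega)]
  exact (pow_dvd_pow 2 (by omega)).mul_left _

lemma invCoeff_eq_sum_range (k : ℕ) (n : ℤ) {N : ℕ} (hN : n.toNat + 1 ≤ N) :
    invCoeff k n = ∑ j ∈ Finset.range N, (-1) ^ j * twoPowChoose (n - (k + 1) * j) j := by
  refine Finset.sum_subset (Finset.range_subset_range.mpr hN) fun j _ hj => ?_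
  rw [Finset.mem_range, not_lt] at hj
  have hjn : (n.toNat : ℤ) + 1 ≤ j := by exact_mod_cast hj
  rw [twoPowChoose_of_neg (by nlinarith [Int.self_le_toNat n]), mul_zero]

lemma invCoeff_of_neg (k : ℕ) {n : ℤ} (hn : n < 0) : invCoeff k n = 0 :=
  Finset.sum_eq_zero fun j _ => by rw [twoPowChoose_of_neg (by nlinarith), mul_zero]

lemma invCoeff_of_le {k : ℕ} {n : ℤ} (h0 : 0 ≤ n) (hk : n ≤ k) : invCoeff k n = 2 ^ n.toNat := by
  rw [invCoeff, Finset.sum_range_succ', Finset.sum_eq_zero fun j _ => ?_]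
  · simp [twoPowChoose, h0]
  · rw [twoPowChoose_of_neg (by push_cast; nlinarith), mul_zero]

lemma invCoeff_succ (k : ℕ) {n : ℤ} (hn : 0 ≤ n) :
    invCoeff k (n + 1) = 2 * invCoeff k n - invCoeff k (n - k) := by
  set N := (n + 1).toNat
  have hsplit : ∑ j ∈ Finset.range (N + 1), ((-1) ^ j * twoPowChoose (n + 1 - (k + 1) * j) j
      - 2 * ((-1) ^ j * twoPowChoose (n - (k + 1) * j) j)) =
      -∑ j ∈ Finset.range N, (-1) ^ j * twoPowChoose (n - k - (k + 1) * j) j := by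
    rw [Finset.sum_range_succ', ← Finset.sum_neg_distrib]
    simp only [Nat.cast_zero, mul_zero, sub_zero, pow_zero, one_mul]
    have h0 := twoPowChoose_zero_sub (t := n + 1) (by omega)
    rw [add_sub_cancel_right] at h0
    rw [h0, add_zero]
    refine Finset.sum_congr rfl fun j _ => ?_
    have h := twoPowChoose_succ_sub (n - k - (k + 1) * j) j
    rw [show n + 1 - (k + 1) * ((j + 1 : ℕ) : ℤ) = n - k - (k + 1) * j by push_cast; ring,
      show n - (k + 1) * ((j + 1 : ℕ) : ℤ) = n - k - (k + 1) * j - 1 by push_cast; ring]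
    linear_combination (-1) ^ (j + 1) * h
  rw [Finset.sum_sub_distrib, ← Finset.mul_sum] at hsplit
  rw [invCoeff, invCoeff_eq_sum_range k n (N := N + 1) (by omega),
    invCoeff_eq_sum_range k (n - k) (N := N) (by omega)]
  linarith

lemma invCoeff_modEq {k a : ℕ} (hak : a ≤ k) (m : ℕ) :
    invCoeff k (a + m * (k + 1)) ≡ (-1) ^ m * (a + m).choose m * 2 ^ a
      [ZMOD 2 ^ (a + k + 1)] := by
  have hm : m ∈ Finset.range ((a + m * (k + 1) : ℤ).toNat + 1) := by
    rw [Finset.mem_range,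
      show (a + m * (k + 1) : ℤ) = ((a + m * (k + 1) : ℕ) : ℤ) by push_cast; ring,
      Int.toNat_natCast]
    nlinarith
  have hmain : (-1) ^ m * twoPowChoose (a + m * (k + 1) - (k + 1) * m) m =
      (-1) ^ m * (a + m).choose m * 2 ^ a := by
    rw [show (a + m * (k + 1) - (k + 1) * m : ℤ) = a by ring, twoPowChoose_natCast, mul_assoc]
  have hrest : (2 : ℤ) ^ (a + k + 1) ∣
      ∑ j ∈ (Finset.range ((a + m * (k + 1) : ℤ).toNat + 1)).erase m,
        (-1) ^ j * twoPowChoose (a + m * (k + 1) - (k + 1) * j) j := by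
    refine Finset.dvd_sum fun j hj => ?_
    rcases lt_or_gt_of_ne (Finset.ne_of_mem_erase hj) with hjm | hjm
    · have : (j : ℤ) + 1 ≤ m := by exact_mod_cast hjm
      exact (two_pow_dvd_twoPowChoose (by push_cast; nlinarith) j).mul_left _
    · have : (m : ℤ) + 1 ≤ j := by exact_mod_cast hjm
      rw [twoPowChoose_of_neg (by nlinarith), mul_zero]
      exact dvd_zero _
  rw [invCoeff, ← Finset.sum_erase_add _ _ hm, hmain]
  exact (Int.modEq_iff_dvd.mpr (by rwa [add_sub_cancel_right])).symm

lemma eq_of_rec {α : Type*} {f g : ℤ → α} {Φ : α → α → α} {k : ℕ} {a : ℤ}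
    (hf : ∀ x, a + k ≤ x → f (x + 1) = Φ (f x) (f (x - k)))
    (hg : ∀ x, a + k ≤ x → g (x + 1) = Φ (g x) (g (x - k)))
    (hinit : ∀ x, a ≤ x → x ≤ a + k → f x = g x) {x : ℤ} (hx : a ≤ x) : f x = g x := by
  obtain ⟨d, rfl⟩ : ∃ d : ℕ, x = a + d := ⟨(x - a).toNat, by omega⟩
  induction d using Nat.strong_induction_on with
  | _ d ih =>
    by_cases hd : d ≤ k
    · exact hinit _ hx (by omega)
    obtain ⟨e, rfl⟩ : ∃ e, d = e + 1 := ⟨d - 1, by omega⟩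
    have hprev := ih e (by omega) (by omega)
    have hlag := ih (e - k) (by omega) (by omega)
    rw [show a + (e - k : ℕ) = a + e - k by omega] at hlag
    rw [Nat.cast_succ, ← add_assoc, hf _ (by omega), hg _ (by omega), hprev, hlag]

lemma two_term_rec_of_sum_rec {k : ℕ} {L : ℤ → ℤ}
    (hrec : ∀ n : ℤ, L n = ∑ i ∈ Finset.range k, L (n - 1 - (i : ℤ))) (x : ℤ) :
    L (x + 1) = 2 * L x - L (x - k) := by
  have htel := Finset.sum_range_sub' (fun i : ℕ => L (x - i)) k
  rw [Finset.sum_sub_distrib] at htel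
  have h1 : L (x + 1) = ∑ i ∈ Finset.range k, L (x - i) := by
    simp only [hrec (x + 1), add_sub_cancel_right]
  have h2 : L x = ∑ i ∈ Finset.range k, L (x - (i + 1 : ℕ)) := by
    simp only [hrec x, Nat.cast_succ, sub_add_eq_sub_sub_swap]
  simp only [Nat.cast_zero, sub_zero] at htel
  linarith

lemma apply_one_sub_eq_neg_one {k : ℕ} (hk : 2 ≤ k) {L : ℤ → ℤ} (hL0 : L 0 = 2) (hL1 : L 1 = 1)
    (hLneg : ∀ n : ℤ, 2 - (k : ℤ) ≤ n → n ≤ -1 → L n = 0)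
    (hrec : ∀ n : ℤ, L n = ∑ i ∈ Finset.range k, L (n - 1 - (i : ℤ))) :
    L (1 - k) = -1 := by
  obtain ⟨p, rfl⟩ : ∃ p, k = p + 2 := ⟨k - 2, by omega⟩
  have h := hrec 1
  rw [Finset.sum_range_succ, Finset.sum_range_succ',
    Finset.sum_eq_zero fun i hi => hLneg _ (by have := Finset.mem_range.mp hi; push_cast; omega)
      (by push_cast; omega)] at h
  push_cast at h ⊢
  rw [zero_sub, hL0, hL1, show -((p : ℤ) + 1) = 1 - (p + 2) by ring] at h
  linarith

lemma eq_invCoeff_combination {k : ℕ} (hk : 2 ≤ k) {L : ℤ → ℤ} (hL0 : L 0 = 2) (hL1 : L 1 = 1)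
    (hLneg : ∀ n : ℤ, 2 - (k : ℤ) ≤ n → n ≤ -1 → L n = 0)
    (hrec : ∀ n : ℤ, L n = ∑ i ∈ Finset.range k, L (n - 1 - (i : ℤ))) {n : ℤ} (hn : 2 - k ≤ n) :
    L n = 2 * invCoeff k n - 3 * invCoeff k (n - 1) + invCoeff k (n - 2) := by
  refine eq_of_rec (Φ := fun p q => 2 * p - q) (a := 2 - k) (k := k)
    (g := fun n => 2 * invCoeff k n - 3 * invCoeff k (n - 1) + invCoeff k (n - 2))
    (fun x _ => two_term_rec_of_sum_rec hrec x) (fun x hx => ?_) (fun x hx hx' => ?_) hn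
  · have h1 := invCoeff_succ k (n := x) (by omega)
    have h2 := invCoeff_succ k (n := x - 1) (by omega)
    have h3 := invCoeff_succ k (n := x - 2) (by omega)
    ring_nf at h1 h2 h3 ⊢
    linarith
  · have hu : ∀ y : ℤ, y < 0 → invCoeff k y = 0 := fun y => invCoeff_of_neg k
    have hu0 : invCoeff k 0 = 1 := invCoeff_of_le le_rfl (by omega)
    have hu1 : invCoeff k 1 = 2 := invCoeff_of_le zero_le_one (by omega)
    have hu2 : invCoeff k 2 = 4 := invCoeff_of_le zero_le_two (by omega)
    rcases lt_or_ge x 0 with hx0 | hx0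
    · simp [hLneg x hx (by omega), hu _ hx0, hu (x - 1) (by omega), hu (x - 2) (by omega)]
    obtain rfl | rfl | rfl : x = 0 ∨ x = 1 ∨ x = 2 := by omega
    · simp [hL0, hu0, hu]
    · simp [hL1, hu0, hu1, hu]
    · rw [show (2 : ℤ) = 1 + 1 by norm_num, two_term_rec_of_sum_rec hrec,
        apply_one_sub_eq_neg_one hk hL0 hL1 hLneg hrec, hL1]
      norm_num [hu0, hu1, hu2]

lemma ichoose_natCast (x y : ℕ) : ichoose x y = x.choose y := by
  by_cases h : y ≤ x
  · simp [ichoose, h]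
  · simp [ichoose, h, Nat.choose_eq_zero_of_lt (not_le.mp h)]

lemma ichoose_of_neg (a : ℤ) {b : ℤ} (hb : b < 0) : ichoose a b = 0 := by
  simp [ichoose, not_le.mpr hb]

lemma lucas_bracket_eq {r : ℕ} (hr : 2 ≤ r) (m : ℕ) :
    4 * (ichoose ((m : ℤ) + r + 1) m - ichoose ((m : ℤ) + r - 1) ((m : ℤ) - 2)) -
        (ichoose ((m : ℤ) + r) m - ichoose ((m : ℤ) + r - 2) ((m : ℤ) - 2)) =
      8 * (r + m).choose m - 6 * (r - 1 + m).choose m + (r - 2 + m).choose m := by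
  obtain ⟨a, rfl⟩ : ∃ a, r = a + 2 := ⟨r - 2, by omega⟩
  rw [show (m : ℤ) + (a + 2 : ℕ) + 1 = (m + a + 3 : ℕ) by push_cast; ring,
    show (m : ℤ) + (a + 2 : ℕ) - 1 = (m + a + 1 : ℕ) by push_cast; ring,
    show (m : ℤ) + (a + 2 : ℕ) - 2 = (m + a : ℕ) by push_cast; ring,
    show (m : ℤ) + (a + 2 : ℕ) = (m + a + 2 : ℕ) by push_cast; ring,
    ichoose_natCast, ichoose_natCast, show a + 2 - 1 = a + 1 by rfl, Nat.add_sub_cancel]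
  rcases m with _ | _ | μ
  · simp [ichoose_of_neg]
  · simp [ichoose_of_neg]
    ring
  · rw [show ((μ + 2 : ℕ) : ℤ) - 2 = μ by push_cast; ring, ichoose_natCast, ichoose_natCast,
      show μ + 2 + a + 3 = μ + a + 5 by ring, show μ + 2 + a + 1 = μ + a + 3 by ring,
      show μ + 2 + a + 2 = μ + a + 4 by ring, show μ + 2 + a = μ + a + 2 by ring,
      show a + 2 + (μ + 2) = μ + a + 4 by ring, show a + 1 + (μ + 2) = μ + a + 3 by ring,
      show a + (μ + 2) = μ + a + 2 by ring]
    simp only [Nat.choose_succ_succ', Nat.cast_add]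
    ring

theorem stmt_9 (k : ℕ) (hk : 2 ≤ k) (L : ℤ → ℤ)
    (hL0 : L 0 = 2) (hL1 : L 1 = 1)
    (hLneg : ∀ n : ℤ, 2 - (k : ℤ) ≤ n → n ≤ -1 → L n = 0)
    (hLrec : ∀ n : ℤ, L n = ∑ i ∈ Finset.range k, L (n - 1 - (i : ℤ)))
    (r : ℕ) (hr3 : 3 ≤ r) (hrk : r ≤ k)
    (m : ℕ) (n : ℤ) (hn : n = (r : ℤ) + (m : ℤ) * ((k : ℤ) + 1)) :
    L n ≡ (-1) ^ m * 2 ^ (r - 2) *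
        (4 * (ichoose ((m : ℤ) + r + 1) m - ichoose ((m : ℤ) + r - 1) ((m : ℤ) - 2)) -
          (ichoose ((m : ℤ) + r) m - ichoose ((m : ℤ) + r - 2) ((m : ℤ) - 2)))
      [ZMOD 2 ^ (k + r - 2)] := by
  have hmod : ∀ a : ℕ, a ≤ k → r ≤ a + 2 → invCoeff k (a + m * (k + 1)) ≡
      (-1) ^ m * (a + m).choose m * 2 ^ a [ZMOD 2 ^ (k + r - 2)] :=
    fun a hak har => (invCoeff_modEq hak m).of_dvd (pow_dvd_pow 2 (by omega))
  have h0 := hmod r hrk (by omega)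
  have h1 := hmod (r - 1) (by omega) (by omega)
  have h2 := hmod (r - 2) (by omega) (by omega)
  rw [← hn] at h0
  rw [Nat.cast_sub (by omega), show (r : ℤ) - (1 : ℕ) + m * (k + 1) = n - 1 by rw [hn]; ring] at h1
  rw [Nat.cast_sub (by omega), show (r : ℤ) - (2 : ℕ) + m * (k + 1) = n - 2 by rw [hn]; ring] at h2
  have hn0 : 2 - (k : ℤ) ≤ n := by
    have : (0 : ℤ) ≤ m * (k + 1) := by positivity
    omega
  rw [eq_invCoeff_combination hk hL0 hL1 hLneg hLrec hn0, lucas_bracket_eq (by omega) m]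
  convert ((h0.mul_left 2).sub (h1.mul_left 3)).add h2 using 1
  obtain ⟨a, rfl⟩ : ∃ a, r = a + 2 := ⟨r - 2, by omega⟩
  simp only [Nat.add_sub_cancel, show a + 2 - 1 = a + 1 by rfl, pow_succ]
  ring
end

section
/- Let p be a prime and n, k, a positive integers with k ≥ 2, a ≥ 1 and 2 ≤ n ≤ k+1. Then the equation L_n^{(k)} = (p+1)·p^a − 1 has no solutions. -/
/-!
The right-hand side `(p + 1) * p ^ a - 1` is odd, since `p * (p + 1)` is even and `a ≥ 1`.
Telescoping two consecutive instances of the recurrence gives `L m = 2 L (m - 1) - L (m - 1 - k)`,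
and for `3 ≤ m ≤ k + 1` the index `m - 1 - k` lies in `[2 - k, 0]`, where `L` takes the even
values `0` and `2`; so `L m` is even. The remaining case `n = 2` asks for `(p + 1) * p ^ a = 4`,
which has no solution.
-/

theorem sub_eq_sub_of_forall_eq_sum_range {G : Type*} [AddCommGroup G] {k : ℕ} {f : ℤ → G}
    (hf : ∀ n : ℤ, f n = ∑ i ∈ Finset.range k, f (n - 1 - (i : ℤ))) (m : ℤ) :
    f m - f (m - 1) = f (m - 1) - f (m - 1 - k) := by
  have telescope := Finset.sum_range_sub (fun i : ℕ => f (m - 1 - (i : ℤ))) k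
  simp only [Nat.cast_add, Nat.cast_one, Nat.cast_zero, sub_zero, Finset.sum_sub_distrib]
    at telescope
  have shift : ∀ i : ℕ, m - 1 - ((i : ℤ) + 1) = m - 1 - 1 - i := fun i => by ring
  simp only [shift, ← hf] at telescope
  simpa only [neg_sub] using congrArg Neg.neg telescope

theorem Nat.succ_mul_pow_ne_four (p : ℕ) {a : ℕ} (ha : a ≠ 0) : (p + 1) * p ^ a ≠ 4 := by
  rcases p with _ | _ | p
  · simp [ha]
  · simp
  · change (p + 3) * (p + 2) ^ a ≠ 4
    have : (p + 3) * (p + 2) ≤ (p + 3) * (p + 2) ^ a :=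
      Nat.mul_le_mul_left _ (Nat.le_self_pow ha _)
    nlinarith

theorem Int.odd_add_one_mul_pow_sub_one (p : ℤ) {a : ℕ} (ha : a ≠ 0) :
    Odd ((p + 1) * p ^ a - 1) := by
  obtain ⟨b, rfl⟩ := Nat.exists_eq_succ_of_ne_zero ha
  have hev : Even ((p + 1) * p ^ (b + 1)) := by
    rw [show (p + 1) * p ^ (b + 1) = p * (p + 1) * p ^ b by ring]
    exact (Int.even_mul_succ_self p).mul_right _
  exact hev.sub_odd odd_one

section KGeneralizedLucas

variable {k : ℕ} {L : ℤ → ℤ}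

theorem kLucas_two (hk : 2 ≤ k) (hL0 : L 0 = 2) (hL1 : L 1 = 1)
    (hLneg : ∀ n : ℤ, 2 - (k : ℤ) ≤ n → n ≤ -1 → L n = 0)
    (hLrec : ∀ n : ℤ, L n = ∑ i ∈ Finset.range k, L (n - 1 - (i : ℤ))) :
    L 2 = 3 := by
  obtain ⟨j, rfl⟩ : ∃ j, k = j + 2 := ⟨k - 2, by omega⟩
  have htail : ∀ i ∈ Finset.range j, L (2 - 1 - ((i + 1 + 1 : ℕ) : ℤ)) = 0 := by
    intro i hi
    have := Finset.mem_range.mp hi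
    apply hLneg <;> push_cast <;> omega
  rw [hLrec, Finset.sum_range_succ', Finset.sum_range_succ', Finset.sum_congr rfl htail]
  norm_num [hL0, hL1]

theorem even_kLucas (hL0 : L 0 = 2)
    (hLneg : ∀ n : ℤ, 2 - (k : ℤ) ≤ n → n ≤ -1 → L n = 0)
    (hLrec : ∀ n : ℤ, L n = ∑ i ∈ Finset.range k, L (n - 1 - (i : ℤ)))
    {m : ℤ} (h3 : 3 ≤ m) (hm : m ≤ k + 1) : Even (L m) := by
  have hstep : L m = 2 * L (m - 1) - L (m - 1 - k) := by
    linarith [sub_eq_sub_of_forall_eq_sum_range hLrec m]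
  have hback : Even (L (m - 1 - k)) := by
    rcases eq_or_lt_of_le (show m - 1 - k ≤ 0 by omega) with h0 | hneg
    · rw [h0, hL0]; exact even_two
    · rw [hLneg _ (by omega) (by omega)]; exact Even.zero
  rw [hstep]
  exact (even_two_mul _).sub hback

end KGeneralizedLucas

theorem stmt_11_general (k : ℕ) (hk : 2 ≤ k) (L : ℤ → ℤ)
    (hL0 : L 0 = 2) (hL1 : L 1 = 1)
    (hLneg : ∀ n : ℤ, 2 - (k : ℤ) ≤ n → n ≤ -1 → L n = 0)
    (hLrec : ∀ n : ℤ, L n = ∑ i ∈ Finset.range k, L (n - 1 - (i : ℤ)))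
    (p : ℕ) (a : ℕ) (ha : 1 ≤ a)
    (n : ℕ) (hn2 : 2 ≤ n) (hnk : n ≤ k + 1) :
    L n ≠ ((p : ℤ) + 1) * (p : ℤ) ^ a - 1 := by
  intro heq
  rcases eq_or_lt_of_le hn2 with rfl | hn3
  · rw [Nat.cast_ofNat, kLucas_two hk hL0 hL1 hLneg hLrec] at heq
    have h4 : ((p : ℤ) + 1) * (p : ℤ) ^ a = 4 := by linarith
    exact Nat.succ_mul_pow_ne_four p (Nat.one_le_iff_ne_zero.mp ha) (by exact_mod_cast h4)
  · have hodd := Int.odd_add_one_mul_pow_sub_one (p : ℤ) (Nat.one_le_iff_ne_zero.mp ha)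
    rw [← heq, ← Int.not_even_iff_odd] at hodd
    exact hodd (even_kLucas hL0 hLneg hLrec (by omega) (by omega))

theorem stmt_11 (k : ℕ) (hk : 2 ≤ k) (L : ℤ → ℤ)
    (hL0 : L 0 = 2) (hL1 : L 1 = 1)
    (hLneg : ∀ n : ℤ, 2 - (k : ℤ) ≤ n → n ≤ -1 → L n = 0)
    (hLrec : ∀ n : ℤ, L n = ∑ i ∈ Finset.range k, L (n - 1 - (i : ℤ)))
    (p : ℕ) (hp : p.Prime) (a : ℕ) (ha : 1 ≤ a)
    (n : ℕ) (hn2 : 2 ≤ n) (hnk : n ≤ k + 1) :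
    L n ≠ ((p : ℤ) + 1) * (p : ℤ) ^ a - 1 :=
  stmt_11_general k hk L hL0 hL1 hLneg hLrec p a ha n hn2 hnk
end

section
/- For every integer k ≥ 2, letting α denote the unique real root of g_k(X) = X^k − X^{k−1} − ⋯ − X − 1 greater than 1 and f_k(x) = (x−1)/(2 + (k+1)(x−2)), one has 1/2 < f_k(α) ≤ 3/4. -/
/-!
Write `ε = 2 - α`. Summing the geometric series turns the root equation into `α ^ k * ε = 1`,
and `f_k(α) = (1 - ε) / (2 - (k + 1) ε)`, so the two bounds amount to `0 < (3k - 1) ε ≤ 2`, i.e.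
`α ^ k ≥ (3k - 1) / 2`. Bounding every term but the first of `∑ α ^ i` by `α` gives
`α ^ k ≥ 1 + (k - 1) α`; this is already `> 2`, so `α > 3 / 2`, and feeding that back in gives
the required `(3k - 1) / 2`.
-/

open Finset

theorem mul_two_sub_eq_one_of_pow_eq_geom_sum {R : Type*} [CommRing R] {x : R} {k : ℕ}
    (h : x ^ k = ∑ i ∈ range k, x ^ i) : x ^ k * (2 - x) = 1 := by
  have := geom_sum_mul x k
  rw [← h] at this
  linear_combination -this

theorem one_add_mul_le_geom_sum_succ {R : Type*} [Semiring R] [PartialOrder R] [IsOrderedRing R]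
    {x : R} (hx : 1 ≤ x) (n : ℕ) : 1 + n * x ≤ ∑ i ∈ range (n + 1), x ^ i := by
  rw [sum_range_succ', pow_zero, add_comm]
  gcongr
  calc (n : R) * x = ∑ _i ∈ range n, x := by simp
    _ ≤ ∑ i ∈ range n, x ^ (i + 1) := sum_le_sum fun i _ => le_self_pow₀ hx i.succ_ne_zero

theorem div_bounds_of_three_mul_sub_one_mul_le {k α : ℝ} (hk : 2 ≤ k) (hα : α < 2)
    (h : (3 * k - 1) * (2 - α) ≤ 2) :
    1 / 2 < (α - 1) / (2 + (k + 1) * (α - 2)) ∧ (α - 1) / (2 + (k + 1) * (α - 2)) ≤ 3 / 4 := by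
  have hD : 0 < 2 + (k + 1) * (α - 2) := by nlinarith
  constructor
  · rw [lt_div_iff₀ hD]
    nlinarith
  · rw [div_le_iff₀ hD]
    linarith

theorem stmt_17 (k : ℕ) (hk : 2 ≤ k) (α : ℝ) (hα : 1 < α)
    (hroot : α ^ k = ∑ i ∈ Finset.range k, α ^ i) :
    1 / 2 < (α - 1) / (2 + ((k : ℝ) + 1) * (α - 2)) ∧
    (α - 1) / (2 + ((k : ℝ) + 1) * (α - 2)) ≤ 3 / 4 := by
  have hkey := mul_two_sub_eq_one_of_pow_eq_geom_sum hroot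
  obtain ⟨n, rfl⟩ : ∃ n, k = n + 1 := ⟨k - 1, by omega⟩
  have hn : (1 : ℝ) ≤ n := by exact_mod_cast (by omega : 1 ≤ n)
  have hsum : 1 + n * α ≤ α ^ (n + 1) := hroot ▸ one_add_mul_le_geom_sum_succ hα.le n
  have hα2 : α < 2 := by nlinarith [pow_pos (zero_lt_one.trans hα) (n + 1)]
  have htwo : 2 < α ^ (n + 1) := by nlinarith
  have hα32 : 3 / 2 < α := by nlinarith
  have hpow : (3 * ((n + 1 : ℕ) : ℝ) - 1) / 2 ≤ α ^ (n + 1) := by push_cast; nlinarith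
  refine div_bounds_of_three_mul_sub_one_mul_le (by exact_mod_cast hk) hα2 ?_
  nlinarith
end
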